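/- Fix real constants b₀ < 0 and b₁, and let γ₁ denote the infimum of Re λ over all nonzero eigenvalues λ of the problem b₀y'' + b₁y' = λy, y(0) = y(1/2) = y(1). Then γ₁ = −4b₀π² − b₁²/(4b₀) when |b₁| ≤ −4√3·b₀π, and γ₁ = −16b₀π² when |b₁| > −4√3·b₀π. -/

import Mathlib

/-!
Let `μ₁, μ₂` be the roots of `b₀ μ² + b₁ μ = λ`. By uniqueness for the companion first-order
system, every solution is `A e^{μ₁x} + B e^{μ₂x}`, or `(A + Bx) e^{μx}` for a double root. With
`cᵢ = e^{μᵢ/2}` the conditions `y(0) = y(1/2) = y(1)` force `c₁ = 1`, `c₂ = 1` or `c₁ = c₂`.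
In the first two cases `μ = 4πik` and `Re λ = -16 b₀π²k²`; in the last `μ₁ - μ₂ = 4πik` and
`λ = -4 b₀π²k² - b₁²/(4b₀)`. Both values are attained with `k = 1`, so `γ₁` is the smaller
of the two, and comparing them gives the threshold `|b₁| = -4√3 b₀π`.
-/

open Set

noncomputable section

/-- `lam` is an eigenvalue of the problem `b₀ y'' + b₁ y' = lam y`,
`y(0) = y(1/2) = y(1)`. -/
def IsEigC (b₀ b₁ : ℝ) (lam : ℂ) : Prop :=
  ∃ y : ℝ → ℂ, ContDiffOn ℝ 2 y (Icc 0 1) ∧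
    (∀ x ∈ Icc (0:ℝ) 1,
      (b₀ : ℂ) * iteratedDerivWithin 2 y (Icc (0:ℝ) 1) x +
        (b₁ : ℂ) * derivWithin y (Icc (0:ℝ) 1) x = lam * y x) ∧
    (∃ x ∈ Icc (0:ℝ) 1, y x ≠ 0) ∧ y 0 = y (1 / 2) ∧ y (1 / 2) = y 1

open Complex
open scoped Real

lemma eqOn_Icc_of_lipschitzWith {E : Type*} [NormedAddCommGroup E] [NormedSpace ℝ E]
    {v : E → E} {K : NNReal} (hv : LipschitzWith K v) {f g : ℝ → E} {a b : ℝ}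
    (hf : ∀ t ∈ Icc a b, HasDerivWithinAt f (v (f t)) (Icc a b) t)
    (hg : ∀ t ∈ Icc a b, HasDerivWithinAt g (v (g t)) (Icc a b) t)
    (ha : f a = g a) : EqOn f g (Icc a b) :=
  ODE_solution_unique_of_mem_Icc_right (v := fun _ ↦ v) (s := fun _ ↦ univ)
    (fun _ _ ↦ hv.lipschitzOnWith)
    (fun t ht ↦ (hf t ht).continuousWithinAt)
    (fun t ht ↦ (hf t (Ico_subset_Icc_self ht)).mono_of_mem_nhdsWithin
      (Icc_mem_nhdsGE_of_mem ht))
    (fun _ _ ↦ mem_univ _)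
    (fun t ht ↦ (hg t ht).continuousWithinAt)
    (fun t ht ↦ (hg t (Ico_subset_Icc_self ht)).mono_of_mem_nhdsWithin
      (Icc_mem_nhdsGE_of_mem ht))
    (fun _ _ ↦ mem_univ _) ha

lemma iteratedDerivWithin_two_eq_of_hasDerivAt {F : Type*} [NormedAddCommGroup F]
    [NormedSpace ℝ F] {s : Set ℝ} (hs : UniqueDiffOn ℝ s) {g g₁ g₂ : ℝ → F}
    (hg : ∀ x, HasDerivAt g (g₁ x) x) (hg₁ : ∀ x, HasDerivAt g₁ (g₂ x) x) {x : ℝ} (hx : x ∈ s) :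
    iteratedDerivWithin 2 g s x = g₂ x := by
  rw [iteratedDerivWithin_succ, iteratedDerivWithin_one,
    derivWithin_congr (fun z hz ↦ (hg z).hasDerivWithinAt.derivWithin (hs z hz))
      ((hg x).hasDerivWithinAt.derivWithin (hs x hx))]
  exact (hg₁ x).hasDerivWithinAt.derivWithin (hs x hx)

def companion (p q : ℂ) : ℂ × ℂ →L[ℂ] ℂ × ℂ :=
  (ContinuousLinearMap.snd ℂ ℂ ℂ).prod
    (p • ContinuousLinearMap.fst ℂ ℂ ℂ + q • ContinuousLinearMap.snd ℂ ℂ ℂ)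

@[simp]
lemma companion_apply (p q : ℂ) (z : ℂ × ℂ) : companion p q z = (z.2, p * z.1 + q * z.2) :=
  rfl

section SecondOrder

variable {p q : ℂ}

lemma hasDerivWithinAt_prod_derivWithin {s : Set ℝ} (hs : UniqueDiffOn ℝ s) {y : ℝ → ℂ}
    (hy : ContDiffOn ℝ 2 y s)
    (hode : ∀ x ∈ s, iteratedDerivWithin 2 y s x = p * y x + q * derivWithin y s x)
    {t : ℝ} (ht : t ∈ s) :
    HasDerivWithinAt (fun x ↦ (y x, derivWithin y s x))
      (companion p q (y t, derivWithin y s t)) s t := by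
  have hy₁ : DifferentiableOn ℝ y s := hy.differentiableOn (by norm_num)
  have hy₂ : DifferentiableOn ℝ (derivWithin y s) s :=
    (hy.derivWithin hs (m := 1) (by norm_num)).differentiableOn (by norm_num)
  rw [companion_apply, ← hode t ht, iteratedDerivWithin_succ, iteratedDerivWithin_one]
  exact (hy₁ t ht).hasDerivWithinAt.prodMk (hy₂ t ht).hasDerivWithinAt

lemma eqOn_Icc_of_secondOrder {a b : ℝ} (hab : a < b) {y g g₁ g₂ : ℝ → ℂ}
    (hy : ContDiffOn ℝ 2 y (Icc a b))
    (hode : ∀ x ∈ Icc a b,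
      iteratedDerivWithin 2 y (Icc a b) x = p * y x + q * derivWithin y (Icc a b) x)
    (hg : ∀ x, HasDerivAt g (g₁ x) x) (hg₁ : ∀ x, HasDerivAt g₁ (g₂ x) x)
    (hgode : ∀ x, g₂ x = p * g x + q * g₁ x)
    (h₀ : y a = g a) (h₁ : derivWithin y (Icc a b) a = g₁ a) : EqOn y g (Icc a b) :=
  fun _ hx ↦ congrArg Prod.fst <| eqOn_Icc_of_lipschitzWith (companion p q).lipschitz
    (fun _ ht ↦ hasDerivWithinAt_prod_derivWithin (uniqueDiffOn_Icc hab) hy hode ht)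
    (fun t _ ↦ ((hg t).prodMk (hg₁ t)).hasDerivWithinAt.congr_deriv (by simp [hgode]))
    (Prod.ext h₀ h₁) hx

end SecondOrder

lemma hasDerivAt_exp_add_exp (A B μ₁ μ₂ : ℂ) (x : ℝ) :
    HasDerivAt (fun t : ℝ ↦ A * cexp (μ₁ * t) + B * cexp (μ₂ * t))
      (A * μ₁ * cexp (μ₁ * x) + B * μ₂ * cexp (μ₂ * x)) x := by
  have hexp (μ : ℂ) : HasDerivAt (fun t : ℝ ↦ cexp (μ * t)) (cexp (μ * x) * μ) x := by
    simpa using ((hasDerivAt_id x).ofReal_comp.const_mul μ).cexp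
  exact (((hexp μ₁).const_mul A).add ((hexp μ₂).const_mul B)).congr_deriv (by ring)

lemma hasDerivAt_linear_mul_exp (A B μ : ℂ) (x : ℝ) :
    HasDerivAt (fun t : ℝ ↦ (A + B * t) * cexp (μ * t))
      ((B + μ * A + μ * B * x) * cexp (μ * x)) x := by
  have hlin : HasDerivAt (fun t : ℝ ↦ A + B * t) B x := by
    simpa using ((hasDerivAt_id x).ofReal_comp.const_mul B).const_add A
  have hexp : HasDerivAt (fun t : ℝ ↦ cexp (μ * t)) (cexp (μ * x) * μ) x := by
    simpa using ((hasDerivAt_id x).ofReal_comp.const_mul μ).cexp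
  exact (hlin.mul hexp).congr_deriv (by ring)

lemma exists_eq_exp_add_exp {μ₁ μ₂ : ℂ} (hμ : μ₁ ≠ μ₂) {y : ℝ → ℂ}
    (hy : ContDiffOn ℝ 2 y (Icc 0 1))
    (hode : ∀ x ∈ Icc (0:ℝ) 1, iteratedDerivWithin 2 y (Icc 0 1) x =
      -(μ₁ * μ₂) * y x + (μ₁ + μ₂) * derivWithin y (Icc 0 1) x) :
    ∃ A B : ℂ, ∀ x ∈ Icc (0:ℝ) 1, y x = A * cexp (μ₁ * x) + B * cexp (μ₂ * x) := by
  have hμ' : μ₁ - μ₂ ≠ 0 := sub_ne_zero.2 hμ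
  set y₁ := derivWithin y (Icc 0 1) 0
  set A := (y₁ - μ₂ * y 0) / (μ₁ - μ₂)
  set B := (μ₁ * y 0 - y₁) / (μ₁ - μ₂)
  refine ⟨A, B, eqOn_Icc_of_secondOrder zero_lt_one hy hode (hasDerivAt_exp_add_exp A B μ₁ μ₂)
    (hasDerivAt_exp_add_exp _ _ μ₁ μ₂) (fun x ↦ by ring) ?_ ?_⟩
  · simp only [ofReal_zero, mul_zero, exp_zero, mul_one, A, B]
    field_simp
    ring
  · simp only [ofReal_zero, mul_zero, exp_zero, mul_one, A, B]
    field_simp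
    ring

lemma exists_eq_linear_mul_exp {μ : ℂ} {y : ℝ → ℂ} (hy : ContDiffOn ℝ 2 y (Icc 0 1))
    (hode : ∀ x ∈ Icc (0:ℝ) 1, iteratedDerivWithin 2 y (Icc 0 1) x =
      -(μ * μ) * y x + (μ + μ) * derivWithin y (Icc 0 1) x) :
    ∃ A B : ℂ, ∀ x ∈ Icc (0:ℝ) 1, y x = (A + B * x) * cexp (μ * x) := by
  set B := derivWithin y (Icc 0 1) 0 - μ * y 0
  refine ⟨y 0, B, eqOn_Icc_of_secondOrder zero_lt_one hy hode
    (hasDerivAt_linear_mul_exp (y 0) B μ) (hasDerivAt_linear_mul_exp _ _ μ)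
    (fun x ↦ by ring) (by simp) (by simp [B])⟩

lemma cexp_mul_half (μ : ℂ) : cexp (μ * ((1 / 2 : ℝ) : ℂ)) = cexp (μ / 2) := by
  push_cast
  ring_nf

lemma cexp_mul_one (μ : ℂ) : cexp (μ * ((1 : ℝ) : ℂ)) = cexp (μ / 2) ^ 2 := by
  rw [← exp_nat_mul]
  push_cast
  ring_nf

section BoundaryConditions

variable {y : ℝ → ℂ}

lemma exp_half_eq_one_of_eq_linear_mul_exp {A B μ : ℂ}
    (hform : ∀ x ∈ Icc (0:ℝ) 1, y x = (A + B * x) * cexp (μ * x))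
    (hne : ∃ x ∈ Icc (0:ℝ) 1, y x ≠ 0) (h₀ : y 0 = y (1 / 2)) (h₁ : y (1 / 2) = y 1) :
    cexp (μ / 2) = 1 := by
  rw [hform 0 (by norm_num), hform (1 / 2) (by norm_num), cexp_mul_half] at h₀
  rw [hform (1 / 2) (by norm_num), hform 1 (by norm_num), cexp_mul_half, cexp_mul_one] at h₁
  push_cast at h₀ h₁
  simp only [mul_zero, add_zero, exp_zero, mul_one] at h₀
  set c := cexp (μ / 2)
  by_contra hc
  -- `c (c - 1)² / 2` is the determinant of the two conditions as a linear system in `A`, `B`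
  have hdet : c * (c - 1) ^ 2 ≠ 0 :=
    mul_ne_zero (exp_ne_zero _) (pow_ne_zero _ (sub_ne_zero.2 hc))
  have hA : A = 0 := by
    refine (mul_eq_zero.1 ?_).resolve_right hdet
    linear_combination (c - 2 * c ^ 2) * h₀ + c * h₁
  have hB : B = 0 := by
    refine (mul_eq_zero.1 ?_).resolve_right (exp_ne_zero (μ / 2))
    linear_combination -2 * h₀ + (2 - 2 * c) * hA
  obtain ⟨x, hx, hyx⟩ := hne
  exact hyx (by simp [hform x hx, hA, hB])

lemma exp_half_cases_of_eq_exp_add_exp {A B μ₁ μ₂ : ℂ}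
    (hform : ∀ x ∈ Icc (0:ℝ) 1, y x = A * cexp (μ₁ * x) + B * cexp (μ₂ * x))
    (hne : ∃ x ∈ Icc (0:ℝ) 1, y x ≠ 0) (h₀ : y 0 = y (1 / 2)) (h₁ : y (1 / 2) = y 1) :
    cexp (μ₁ / 2) = 1 ∨ cexp (μ₂ / 2) = 1 ∨ cexp (μ₁ / 2) = cexp (μ₂ / 2) := by
  rw [hform 0 (by norm_num), hform (1 / 2) (by norm_num), cexp_mul_half, cexp_mul_half] at h₀
  rw [hform (1 / 2) (by norm_num), hform 1 (by norm_num), cexp_mul_half, cexp_mul_half,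
    cexp_mul_one, cexp_mul_one] at h₁
  simp only [ofReal_zero, mul_zero, exp_zero, mul_one] at h₀
  set c₁ := cexp (μ₁ / 2)
  set c₂ := cexp (μ₂ / 2)
  by_contra! ⟨hc₁, hc₂, hc₁₂⟩
  -- with `u = A (c₁ - 1)` and `v = B (c₂ - 1)` the conditions read `u + v = 0`, `c₁ u + c₂ v = 0`
  have hu : A * (c₁ - 1) = 0 := by
    refine (mul_eq_zero.1 ?_).resolve_right (sub_ne_zero.2 hc₁₂)
    linear_combination c₂ * h₀ - h₁
  have hv : B * (c₂ - 1) = 0 := by linear_combination -h₀ - hu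
  have hA := (mul_eq_zero.1 hu).resolve_right (sub_ne_zero.2 hc₁)
  have hB := (mul_eq_zero.1 hv).resolve_right (sub_ne_zero.2 hc₂)
  obtain ⟨x, hx, hyx⟩ := hne
  exact hyx (by simp [hform x hx, hA, hB])

lemma exp_half_cases {μ₁ μ₂ : ℂ} (hy : ContDiffOn ℝ 2 y (Icc 0 1))
    (hode : ∀ x ∈ Icc (0:ℝ) 1, iteratedDerivWithin 2 y (Icc 0 1) x =
      -(μ₁ * μ₂) * y x + (μ₁ + μ₂) * derivWithin y (Icc 0 1) x)
    (hne : ∃ x ∈ Icc (0:ℝ) 1, y x ≠ 0) (h₀ : y 0 = y (1 / 2)) (h₁ : y (1 / 2) = y 1) :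
    cexp (μ₁ / 2) = 1 ∨ cexp (μ₂ / 2) = 1 ∨ μ₁ ≠ μ₂ ∧ cexp (μ₁ / 2) = cexp (μ₂ / 2) := by
  by_cases hμ : μ₁ = μ₂
  · subst hμ
    obtain ⟨A, B, hform⟩ := exists_eq_linear_mul_exp hy hode
    exact Or.inl (exp_half_eq_one_of_eq_linear_mul_exp hform hne h₀ h₁)
  · obtain ⟨A, B, hform⟩ := exists_eq_exp_add_exp hμ hy hode
    have := exp_half_cases_of_eq_exp_add_exp hform hne h₀ h₁
    tauto

end BoundaryConditions

section Eigenvalues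

variable {b₀ b₁ : ℝ} {lam : ℂ}

lemma re_eq_of_exp_half_eq_one {μ : ℂ} (hμ : (b₀ : ℂ) * μ ^ 2 + b₁ * μ = lam) (hlam : lam ≠ 0)
    (hexp : cexp (μ / 2) = 1) : ∃ k : ℤ, k ≠ 0 ∧ lam.re = -16 * b₀ * π ^ 2 * k ^ 2 := by
  obtain ⟨k, hk⟩ := exp_eq_one_iff.1 hexp
  obtain rfl : μ = k * (4 * π * I) := by linear_combination 2 * hk
  refine ⟨k, ?_, ?_⟩
  · rintro rfl
    exact hlam (by simp [← hμ])
  · rw [← hμ]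
    simp [sq]
    ring

lemma re_eq_of_exp_half_eq {μ₁ μ₂ : ℂ} (hb₀ : b₀ ≠ 0) (hsum : (b₀ : ℂ) * (μ₁ + μ₂) = -b₁)
    (hprod : (b₀ : ℂ) * (μ₁ * μ₂) = -lam) (hμ : μ₁ ≠ μ₂) (hexp : cexp (μ₁ / 2) = cexp (μ₂ / 2)) :
    ∃ k : ℤ, k ≠ 0 ∧ lam.re = -4 * b₀ * π ^ 2 * k ^ 2 - b₁ ^ 2 / (4 * b₀) := by
  have hexp' : cexp (μ₁ / 2 - μ₂ / 2) = 1 := by rw [exp_sub, hexp, div_self (exp_ne_zero _)]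
  obtain ⟨k, hk⟩ := exp_eq_one_iff.1 hexp'
  have hdiff : μ₁ - μ₂ = k * (4 * π * I) := by linear_combination 2 * hk
  refine ⟨k, ?_, ?_⟩
  · rintro rfl
    exact hμ (sub_eq_zero.1 (by simpa using hdiff))
  · -- `(μ₁ + μ₂)² - (μ₁ - μ₂)² = 4 μ₁ μ₂` expresses `lam` through `b₀`, `b₁` and `k`
    have hlam : (4 * b₀ : ℂ) * lam = ((-b₁ ^ 2 - 16 * π ^ 2 * k ^ 2 * b₀ ^ 2 : ℝ) : ℂ) := by
      push_cast
      linear_combination 4 * b₀ * hprod - (b₀ * (μ₁ + μ₂) - b₁) * hsum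
        + b₀ ^ 2 * (μ₁ - μ₂ + k * (4 * π * I)) * hdiff + 16 * π ^ 2 * k ^ 2 * b₀ ^ 2 * I_sq
    have hre := congrArg re hlam
    rw [← ofReal_ofNat, ← ofReal_mul, re_ofReal_mul, ofReal_re] at hre
    field_simp
    linear_combination hre

lemma exists_roots_vieta (hb₀ : b₀ ≠ 0) (lam : ℂ) :
    ∃ μ₁ μ₂ : ℂ, (b₀ : ℂ) * (μ₁ + μ₂) = -b₁ ∧ (b₀ : ℂ) * (μ₁ * μ₂) = -lam := by
  have hb₀' : (b₀ : ℂ) ≠ 0 := ofReal_ne_zero.2 hb₀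
  obtain ⟨μ, hμ⟩ := exists_quadratic_eq_zero (b := (b₁ : ℂ)) (c := -lam) hb₀'
    (IsAlgClosed.exists_eq_mul_self _)
  refine ⟨μ, -b₁ / b₀ - μ, by field_simp; ring, ?_⟩
  field_simp
  linear_combination -hμ

lemma re_cases_of_isEigC (hb₀ : b₀ ≠ 0) (hlam : lam ≠ 0) (h : IsEigC b₀ b₁ lam) :
    ∃ k : ℤ, k ≠ 0 ∧ (lam.re = -16 * b₀ * π ^ 2 * k ^ 2 ∨
      lam.re = -4 * b₀ * π ^ 2 * k ^ 2 - b₁ ^ 2 / (4 * b₀)) := by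
  obtain ⟨y, hy, hode, hne, h₀, h₁⟩ := h
  obtain ⟨μ₁, μ₂, hsum, hprod⟩ := exists_roots_vieta hb₀ lam (b₁ := b₁)
  have hb₀' : (b₀ : ℂ) ≠ 0 := ofReal_ne_zero.2 hb₀
  have hroot₁ : (b₀ : ℂ) * μ₁ ^ 2 + b₁ * μ₁ = lam := by linear_combination μ₁ * hsum - hprod
  have hroot₂ : (b₀ : ℂ) * μ₂ ^ 2 + b₁ * μ₂ = lam := by linear_combination μ₂ * hsum - hprod
  have hode' : ∀ x ∈ Icc (0:ℝ) 1, iteratedDerivWithin 2 y (Icc 0 1) x =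
      -(μ₁ * μ₂) * y x + (μ₁ + μ₂) * derivWithin y (Icc 0 1) x := by
    intro x hx
    apply mul_left_cancel₀ hb₀'
    linear_combination hode x hx + y x * hprod - derivWithin y (Icc 0 1) x * hsum
  rcases exp_half_cases hy hode' hne h₀ h₁ with hexp | hexp | ⟨hμ, hexp⟩
  · obtain ⟨k, hk, hre⟩ := re_eq_of_exp_half_eq_one hroot₁ hlam hexp
    exact ⟨k, hk, .inl hre⟩
  · obtain ⟨k, hk, hre⟩ := re_eq_of_exp_half_eq_one hroot₂ hlam hexp
    exact ⟨k, hk, .inl hre⟩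
  · obtain ⟨k, hk, hre⟩ := re_eq_of_exp_half_eq hb₀ hsum hprod hμ hexp
    exact ⟨k, hk, .inr hre⟩

lemma isEigC_of_exp_add_exp {μ₁ μ₂ A B : ℂ} (hμ₁ : (b₀ : ℂ) * μ₁ ^ 2 + b₁ * μ₁ = lam)
    (hμ₂ : (b₀ : ℂ) * μ₂ ^ 2 + b₁ * μ₂ = lam)
    (hne : ∃ x ∈ Icc (0:ℝ) 1, A * cexp (μ₁ * x) + B * cexp (μ₂ * x) ≠ 0)
    (h₀ : A + B = A * cexp (μ₁ / 2) + B * cexp (μ₂ / 2))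
    (h₁ : A * cexp (μ₁ / 2) + B * cexp (μ₂ / 2) =
      A * cexp (μ₁ / 2) ^ 2 + B * cexp (μ₂ / 2) ^ 2) :
    IsEigC b₀ b₁ lam := by
  have hs : UniqueDiffOn ℝ (Icc (0:ℝ) 1) := uniqueDiffOn_Icc zero_lt_one
  have hd := hasDerivAt_exp_add_exp A B μ₁ μ₂
  have hd₁ := hasDerivAt_exp_add_exp (A * μ₁) (B * μ₂) μ₁ μ₂
  have hexp (μ : ℂ) : ContDiff ℝ 2 fun t : ℝ ↦ cexp (μ * t) :=
    (contDiff_const.mul ofRealCLM.contDiff).cexp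
  refine ⟨fun t ↦ A * cexp (μ₁ * t) + B * cexp (μ₂ * t),
    ((contDiff_const.mul (hexp μ₁)).add (contDiff_const.mul (hexp μ₂))).contDiffOn,
    fun x hx ↦ ?_, hne, ?_, ?_⟩
  · rw [iteratedDerivWithin_two_eq_of_hasDerivAt hs hd hd₁ hx,
      (hd x).hasDerivWithinAt.derivWithin (hs x hx)]
    linear_combination (A * cexp (μ₁ * x)) * hμ₁ + (B * cexp (μ₂ * x)) * hμ₂
  · beta_reduce
    rw [cexp_mul_half, cexp_mul_half]
    simpa using h₀
  · beta_reduce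
    rwa [cexp_mul_half, cexp_mul_half, cexp_mul_one, cexp_mul_one]

lemma isEigC_four_pi_I : IsEigC b₀ b₁ (b₀ * (4 * π * I) ^ 2 + b₁ * (4 * π * I)) := by
  have hexp : cexp (4 * π * I / 2) = 1 := exp_eq_one_iff.2 ⟨1, by ring⟩
  exact isEigC_of_exp_add_exp (A := 1) (B := 0) rfl rfl ⟨0, by norm_num, by simp⟩
    (by simp [hexp]) (by simp [hexp])

lemma isEigC_neg_four_mul_pi_sq_sub (hb₀ : b₀ ≠ 0) :
    IsEigC b₀ b₁ ((-4 * b₀ * π ^ 2 - b₁ ^ 2 / (4 * b₀) : ℝ) : ℂ) := by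
  have hb₀' : (b₀ : ℂ) ≠ 0 := ofReal_ne_zero.2 hb₀
  have hroot (s : ℂ) (hs : s ^ 2 = -1) :
      (b₀ : ℂ) * (-b₁ / (2 * b₀) + 2 * π * s) ^ 2 + b₁ * (-b₁ / (2 * b₀) + 2 * π * s) =
        ((-4 * b₀ * π ^ 2 - b₁ ^ 2 / (4 * b₀) : ℝ) : ℂ) := by
    push_cast
    field_simp
    linear_combination (64 * b₀ ^ 2 * π ^ 2) * hs
  set μ₂ : ℂ := -b₁ / (2 * b₀) + 2 * π * -I
  have hμ₁ : -b₁ / (2 * b₀) + 2 * π * I = μ₂ + 4 * π * I := by ring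
  have hhalf : cexp ((μ₂ + 4 * π * I) / 2) = cexp (μ₂ / 2) :=
    exp_eq_exp_iff_exists_int.2 ⟨1, by ring⟩
  refine isEigC_of_exp_add_exp (A := 1) (B := -1) (hroot I I_sq) (hroot (-I) (by simp))
    ⟨1 / 4, by norm_num, ?_⟩ (by rw [hμ₁, hhalf]; ring) (by rw [hμ₁, hhalf]; ring)
  rw [hμ₁, show (μ₂ + 4 * π * I) * ((1 / 4 : ℝ) : ℂ) = μ₂ * ((1 / 4 : ℝ) : ℂ) + π * I by
    push_cast; ring, exp_add, exp_pi_mul_I]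
  intro h
  exact exp_ne_zero _ (by linear_combination -h / 2)

lemma min_le_re_of_isEigC (hb₀ : b₀ < 0) (hlam : lam ≠ 0) (h : IsEigC b₀ b₁ lam) :
    min (-16 * b₀ * π ^ 2) (-4 * b₀ * π ^ 2 - b₁ ^ 2 / (4 * b₀)) ≤ lam.re := by
  obtain ⟨k, hk, hre⟩ := re_cases_of_isEigC hb₀.ne hlam h
  have hk₁ : (1 : ℝ) ≤ (k : ℝ) ^ 2 := by
    exact_mod_cast (one_le_sq_iff_one_le_abs _).2 (Int.one_le_abs hk)
  have hgap : 0 ≤ ((k : ℝ) ^ 2 - 1) * (-b₀ * π ^ 2) :=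
    mul_nonneg (sub_nonneg.2 hk₁) (mul_nonneg (neg_nonneg.2 hb₀.le) (sq_nonneg π))
  rcases hre with hre | hre
  · exact min_le_of_left_le (by rw [hre]; linarith)
  · exact min_le_of_right_le (by rw [hre]; linarith)

lemma sInf_re_eigenvalues (hb₀ : b₀ < 0) :
    sInf {r : ℝ | ∃ lam : ℂ, lam ≠ 0 ∧ IsEigC b₀ b₁ lam ∧ r = lam.re} =
      min (-16 * b₀ * π ^ 2) (-4 * b₀ * π ^ 2 - b₁ ^ 2 / (4 * b₀)) := by
  refine IsLeast.csInf_eq ⟨?_, fun r ⟨lam, hlam, h, hr⟩ ↦ hr ▸ min_le_re_of_isEigC hb₀ hlam h⟩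
  have hπb₀ : b₀ * π ^ 2 < 0 := mul_neg_of_neg_of_pos hb₀ (by positivity)
  rcases min_choice (-16 * b₀ * π ^ 2) (-4 * b₀ * π ^ 2 - b₁ ^ 2 / (4 * b₀)) with hmin | hmin <;>
    rw [hmin]
  · have hre : ((b₀ : ℂ) * (4 * π * I) ^ 2 + b₁ * (4 * π * I)).re = -16 * b₀ * π ^ 2 := by
      simp [sq]
      ring
    refine ⟨_, fun h0 ↦ ?_, isEigC_four_pi_I, hre.symm⟩
    rw [h0, zero_re] at hre
    linarith
  · have hq : b₁ ^ 2 / (4 * b₀) ≤ 0 := div_nonpos_of_nonneg_of_nonpos (sq_nonneg _) (by linarith)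
    exact ⟨_, ofReal_ne_zero.2 (by linarith), isEigC_neg_four_mul_pi_sq_sub hb₀.ne,
      (ofReal_re _).symm⟩

lemma eigenvalue_bound_le_iff_abs_le (hb₀ : b₀ < 0) :
    -4 * b₀ * π ^ 2 - b₁ ^ 2 / (4 * b₀) ≤ -16 * b₀ * π ^ 2 ↔
      |b₁| ≤ -4 * Real.sqrt 3 * b₀ * π := by
  have hc : 0 ≤ -4 * Real.sqrt 3 * b₀ * π := by
    nlinarith [mul_nonneg (Real.sqrt_nonneg 3) (neg_nonneg.2 hb₀.le), Real.pi_pos]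
  have hdiff : -4 * b₀ * π ^ 2 - b₁ ^ 2 / (4 * b₀) - -16 * b₀ * π ^ 2 =
      (b₁ ^ 2 - (-4 * Real.sqrt 3 * b₀ * π) ^ 2) / (-4 * b₀) := by
    field_simp
    rw [Real.sq_sqrt (by norm_num)]
    ring
  rw [← sub_nonpos, hdiff, div_le_iff₀ (by linarith), zero_mul, sub_nonpos, ← sq_abs b₁,
    sq_le_sq₀ (abs_nonneg _) hc]

end Eigenvalues

theorem stmt19 (b₀ b₁ : ℝ) (hb₀ : b₀ < 0) :
    letI γ₁ : ℝ := sInf {r : ℝ | ∃ lam : ℂ, lam ≠ 0 ∧ IsEigC b₀ b₁ lam ∧ r = lam.re}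
    (|b₁| ≤ -4 * Real.sqrt 3 * b₀ * Real.pi →
      γ₁ = -4 * b₀ * Real.pi ^ 2 - b₁ ^ 2 / (4 * b₀)) ∧
    (|b₁| > -4 * Real.sqrt 3 * b₀ * Real.pi →
      γ₁ = -16 * b₀ * Real.pi ^ 2) := by
  rw [sInf_re_eigenvalues hb₀]
  exact ⟨fun h ↦ min_eq_right ((eigenvalue_bound_le_iff_abs_le hb₀).2 h),
    fun h ↦ min_eq_left (not_le.1 (mt (eigenvalue_bound_le_iff_abs_le hb₀).1 (not_le.2 h))).le⟩
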